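/- arXiv:2110.06260 — 3 statements merged into one kernel-verified Lean document; each statement's English description precedes it below -/
import Mathlib

section
/- Let K be a totally real number field with discriminant Δ. Every γ ∈ O_K⁺ can be written as γ = γ₀ + β₁² + ⋯ + β_t² for some t ≥ 0, where γ₀ ∈ O_K⁺ satisfies N_{K/ℚ}(γ₀) ≤ Δ and β₁, …, β_t ∈ O_K. -/
open NumberField

/-- A number field is totally real if every complex embedding has image contained in `ℝ`. -/
def IsTotallyRealField (K : Type) [Field K] : Prop :=
  ∀ σ : K →+* ℂ, ∀ x : K, (σ x).im = 0

/-- An element of a field is totally positive if it is positive under every real embedding. -/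
def TotallyPositive {K : Type} [Field K] (x : K) : Prop :=
  ∀ σ : K →+* ℝ, 0 < σ x

/-!
If `N(γ) > Δ`, Minkowski's theorem applied to the box `|σ(a)| < √σ(γ)`, whose volume
`2ⁿ √N(γ)` exceeds the Minkowski bound `2ⁿ √Δ`, gives a nonzero `a ∈ 𝓞 K` with `σ(a)² < σ(γ)`
for every real embedding `σ`. Then `γ - a²` is totally positive, and its norm
`∏ (σ(γ) - σ(a)²)` is strictly smaller than `N(γ)`; induction on the norm finishes the proof.
-/

open NumberField.InfinitePlace

theorem IsTotallyRealField.isTotallyReal {K : Type} [Field K] (hK : IsTotallyRealField K) :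
    IsTotallyReal K :=
  ⟨fun _ => isReal_iff.mpr <| ComplexEmbedding.isReal_iff.mpr <|
    RingHom.ext fun x => Complex.conj_eq_iff_im.mpr (hK _ x)⟩

theorem NumberField.IsTotallyReal.discr_pos (K : Type) [Field K] [NumberField K]
    [IsTotallyReal K] : 0 < discr K := by
  have hsign := sign_discr K
  rw [IsTotallyReal.nrComplexPlaces_eq_zero, pow_zero] at hsign
  exact Int.sign_eq_one_iff_pos.mp hsign

section TotallyPositive

variable {K : Type} [Field K] {x a : K}

theorem TotallyPositive.infinitePlace_apply (hx : TotallyPositive x) {w : InfinitePlace K}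
    (hw : IsReal w) : w x = embedding_of_isReal hw x := by
  rw [← norm_embedding_of_isReal hw, Real.norm_of_nonneg (hx _).le]

theorem TotallyPositive.sub_sq (hx : TotallyPositive x)
    (h : ∀ w : InfinitePlace K, w a ^ 2 < w x) : TotallyPositive (x - a ^ 2) := by
  intro τ
  have hτ := h (mk (Complex.ofRealHom.comp τ))
  simp only [apply, RingHom.coe_comp, Function.comp_apply, Complex.ofRealHom_eq_coe,
    Complex.norm_real, Real.norm_eq_abs, sq_abs, abs_of_pos (hx τ)] at hτ
  rw [map_sub, map_pow]
  linarith

theorem TotallyPositive.abs_norm_sub_sq_lt [NumberField K] [IsTotallyReal K]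
    (hx : TotallyPositive x) (ha : a ≠ 0) (h : ∀ w : InfinitePlace K, w a ^ 2 < w x) :
    |Algebra.norm ℚ (x - a ^ 2)| < |Algebra.norm ℚ x| := by
  have hxa := hx.sub_sq h
  suffices ((|Algebra.norm ℚ (x - a ^ 2)| : ℚ) : ℝ) < (|Algebra.norm ℚ x| : ℚ) by
    exact_mod_cast this
  rw [← prod_eq_abs_norm, ← prod_eq_abs_norm]
  simp only [IsTotallyReal.mult_eq, pow_one]
  refine Finset.prod_lt_prod_of_nonempty (fun w _ => ?_) (fun w _ => ?_) Finset.univ_nonempty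
  · rw [hxa.infinitePlace_apply (IsTotallyReal.isReal w)]
    exact hxa _
  · have hw := IsTotallyReal.isReal w
    rw [hxa.infinitePlace_apply hw, hx.infinitePlace_apply hw, map_sub, map_pow, sub_lt_self_iff]
    exact pow_two_pos_of_ne_zero ((map_ne_zero _).mpr ha)

end TotallyPositive

open scoped NNReal

open NumberField.mixedEmbedding in
theorem NumberField.IsTotallyReal.exists_ne_zero_mem_ringOfIntegers_lt {K : Type} [Field K]
    [NumberField K] [IsTotallyReal K] (f : InfinitePlace K → ℝ≥0)
    (h : NNReal.sqrt ‖discr K‖₊ < ∏ w, f w) : ∃ a : 𝓞 K, a ≠ 0 ∧ ∀ w, w a < f w := by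
  classical
  refine mixedEmbedding.exists_ne_zero_mem_ringOfIntegers_lt K (f := f) ?_
  rw [convexBodyLT_volume, minkowskiBound, volume_fundamentalDomain_fractionalIdealLatticeBasis,
    volume_fundamentalDomain_latticeBasis, mixedEmbedding.finrank, IsTotallyReal.finrank]
  simp only [Units.val_one, map_one, Rat.cast_one, ENNReal.ofReal_one, one_mul,
    IsTotallyReal.nrComplexPlaces_eq_zero, pow_zero, convexBodyLTFactor, IsTotallyReal.mult_eq,
    pow_one, ENNReal.coe_pow, ENNReal.coe_ofNat, ENNReal.ofNNReal_finsetProd, mul_comm]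
  -- the volume is `2ⁿ ∏ f w` and the Minkowski bound is `2ⁿ √|Δ|`
  gcongr
  · exact ENNReal.coe_ne_top
  · exact_mod_cast h

theorem NumberField.IsTotallyReal.exists_ne_zero_sq_lt {K : Type} [Field K] [NumberField K]
    [IsTotallyReal K] {x : K} (h : |(discr K : ℚ)| < |Algebra.norm ℚ x|) :
    ∃ a : 𝓞 K, a ≠ 0 ∧ ∀ w : InfinitePlace K, w a ^ 2 < w x := by
  have hprod : ∏ w : InfinitePlace K, w x = |(Algebra.norm ℚ x : ℝ)| := by
    simpa using prod_eq_abs_norm x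
  obtain ⟨a, ha, haw⟩ :=
    exists_ne_zero_mem_ringOfIntegers_lt (fun w => NNReal.sqrt (w x).toNNReal) <| by
      rw [← NNReal.coe_lt_coe]
      simp only [NNReal.coe_prod, Real.coe_sqrt, Real.coe_toNNReal _ (apply_nonneg _ _),
        coe_nnnorm, Int.norm_eq_abs]
      rw [← Real.sqrt_prod _ fun w _ => apply_nonneg w x, hprod]
      exact Real.sqrt_lt_sqrt (abs_nonneg _) (by exact_mod_cast h)
  refine ⟨a, ha, fun w => ?_⟩
  have haw' := haw w
  rwa [Real.coe_sqrt, Real.coe_toNNReal _ (apply_nonneg _ _), Real.lt_sqrt (apply_nonneg _ _)]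
    at haw'

section RingOfIntegers

variable {K : Type} [Field K] [NumberField K] [IsTotallyReal K]

theorem TotallyPositive.exists_sub_sq_abs_norm_lt {γ : 𝓞 K} (hγ : TotallyPositive (γ : K))
    (h : |discr K| < |Algebra.norm ℤ γ|) :
    ∃ a : 𝓞 K, TotallyPositive ((γ - a ^ 2 : 𝓞 K) : K) ∧
      |Algebra.norm ℤ (γ - a ^ 2)| < |Algebra.norm ℤ γ| := by
  obtain ⟨a, ha, hsq⟩ := IsTotallyReal.exists_ne_zero_sq_lt (x := (γ : K)) <| by
    rw [← Algebra.coe_norm_int]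
    exact_mod_cast h
  have hcoe : ((γ - a ^ 2 : 𝓞 K) : K) = γ - (a : K) ^ 2 := by push_cast; rfl
  refine ⟨a, hcoe ▸ hγ.sub_sq hsq, ?_⟩
  have hlt := hγ.abs_norm_sub_sq_lt (RingOfIntegers.coe_ne_zero_iff.mpr ha) hsq
  rw [← hcoe, ← Algebra.coe_norm_int, ← Algebra.coe_norm_int] at hlt
  exact_mod_cast hlt

theorem TotallyPositive.exists_eq_add_sum_sq {γ : 𝓞 K} (hγ : TotallyPositive (γ : K)) :
    ∃ (γ₀ : 𝓞 K) (t : ℕ) (β : Fin t → 𝓞 K), TotallyPositive (γ₀ : K) ∧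
      |Algebra.norm ℤ γ₀| ≤ |discr K| ∧ γ = γ₀ + ∑ i, β i ^ 2 := by
  by_cases hsmall : |Algebra.norm ℤ γ| ≤ |discr K|
  · exact ⟨γ, 0, ![], hγ, hsmall, by simp⟩
  obtain ⟨a, ha, hlt⟩ := hγ.exists_sub_sq_abs_norm_lt (not_le.mp hsmall)
  obtain ⟨γ₀, t, β, hγ₀, hN, hβ⟩ := ha.exists_eq_add_sum_sq
  refine ⟨γ₀, t + 1, Fin.cons a β, hγ₀, hN, ?_⟩
  simp only [Fin.sum_univ_succ, Fin.cons_zero, Fin.cons_succ]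
  linear_combination hβ
termination_by (Algebra.norm ℤ γ).natAbs
decreasing_by zify; exact hlt

end RingOfIntegers

/-- Every totally positive `γ ∈ 𝓞 K` can be written as `γ₀ + β₁² + ⋯ + β_t²` with
`γ₀` totally positive of norm at most the discriminant `Δ`. -/
theorem totallyPositive_eq_small_add_sum_squares (K : Type) [Field K] [NumberField K]
    (hK : IsTotallyRealField K)
    (γ : 𝓞 K) (hγ : TotallyPositive (γ : K)) :
    ∃ (γ₀ : 𝓞 K) (t : ℕ) (β : Fin t → 𝓞 K),
      TotallyPositive (γ₀ : K) ∧
      Algebra.norm ℚ (γ₀ : K) ≤ (NumberField.discr K : ℚ) ∧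
      γ = γ₀ + ∑ i, β i ^ 2 := by
  have : IsTotallyReal K := hK.isTotallyReal
  obtain ⟨γ₀, t, β, hγ₀, hN, hγ_eq⟩ := hγ.exists_eq_add_sum_sq
  refine ⟨γ₀, t, β, hγ₀, ?_, hγ_eq⟩
  rw [abs_of_pos (IsTotallyReal.discr_pos K)] at hN
  rw [← Algebra.coe_norm_int]
  exact_mod_cast (le_abs_self _).trans hN
end

section
/- Let F be a totally real number field, let d, m, r be positive integers, let Q be a quadratic form on F^r with coefficients in F that is totally positive definite (positive definite under every embedding F → ℝ), and let L be a finitely generated O_F-submodule of F^r that spans F^r over F and satisfies Q(v) ∈ O_F for all v ∈ L. Fix an algebraic closure F̄ of F. Then the set of intermediate fields K with F ⊆ K ⊆ F̄ such that K is a totally real number field of degree d over ℚ and such that for every α ∈ O_K⁺ there exists a vector w in the O_K-span of L inside K^r with Q(w) = m·α, is finite. -/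
open NumberField

/-- The value at `v` of the quadratic form `∑_{i ≤ j} a i j * x i * x j`. -/
def quadEval {R : Type} [CommRing R] {r : ℕ} (a : Fin r → Fin r → R) (v : Fin r → R) : R :=
  ∑ p ∈ Finset.univ.filter (fun p : Fin r × Fin r => p.1 ≤ p.2), a p.1 p.2 * v p.1 * v p.2


/-!
Write `O_K(n)` for the algebraic integers of `K` whose real conjugates all have absolute value at
most `n`; an integral basis shows `F(O_K(n)) = K` for `n` large. For `x ∈ O_K(n)`, the element
`α = x + n + 1` is totally positive with conjugates at most `2n + 1`, so `mα = Q(w)` for some `w`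
in the span of `L`. Positive definiteness at every real place bounds the conjugates of `w` by
`O(√n)`, and a common denominator `D` of `L` makes `D w` integral; since `x = Q(w)/m - n - 1`,
this gives `F(O_K(n)) ⊆ F(O_K(C √n))`. Descending, `K = F(O_K(N))` for an `N` independent of `K`,
so `K` is generated by a subset of the finite set of algebraic integers of degree at most `d`
whose conjugates are bounded by `N`.
-/

section QuadraticForm

variable {R : Type} [CommRing R] {r : ℕ}

theorem quadEval_map {S : Type} [CommRing S] (f : R →+* S) (a : Fin r → Fin r → R)
    (v : Fin r → R) : f (quadEval a v) = quadEval (fun i j => f (a i j)) (fun i => f (v i)) := by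
  simp [quadEval]

theorem quadEval_smul (a : Fin r → Fin r → R) (c : R) (v : Fin r → R) :
    quadEval a (c • v) = c ^ 2 * quadEval a v := by
  simp only [quadEval, Finset.mul_sum, Pi.smul_apply, smul_eq_mul]
  exact Finset.sum_congr rfl fun _ _ => by ring

theorem quadEval_mem {S : Type} [SetLike S R] [SubringClass S R] (s : S)
    {a : Fin r → Fin r → R} {v : Fin r → R} (ha : ∀ i j, a i j ∈ s) (hv : ∀ i, v i ∈ s) :
    quadEval a v ∈ s :=
  sum_mem fun _ _ => mul_mem (mul_mem (ha _ _) (hv _)) (hv _)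

theorem continuous_quadEval (a : Fin r → Fin r → ℝ) : Continuous (quadEval a) := by
  unfold quadEval
  fun_prop

end QuadraticForm

section PositiveDefinite

variable {V : Type*} [NormedAddCommGroup V] [NormedSpace ℝ V] [FiniteDimensional ℝ V]

theorem exists_pos_mul_norm_sq_le {f : V → ℝ} (hf : Continuous f)
    (hsmul : ∀ (c : ℝ) (v : V), f (c • v) = c ^ 2 * f v) (hpos : ∀ v, v ≠ 0 → 0 < f v) :
    ∃ ε > 0, ∀ v, ε * ‖v‖ ^ 2 ≤ f v := by
  have hf0 : f 0 = 0 := by simpa using hsmul 0 0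
  rcases subsingleton_or_nontrivial V with hV | hV
  · exact ⟨1, one_pos, fun v => by simp [Subsingleton.elim v 0, hf0]⟩
  obtain ⟨u, hu, hmin⟩ := (isCompact_sphere (0 : V) 1).exists_isMinOn
    (NormedSpace.sphere_nonempty.2 zero_le_one) hf.continuousOn
  have hu1 : ‖u‖ = 1 := by simpa using hu
  refine ⟨f u, hpos u (by rintro rfl; simp at hu1), fun v => ?_⟩
  rcases eq_or_ne v 0 with rfl | hv
  · simp [hf0]
  have hv' : 0 < ‖v‖ := norm_pos_iff.2 hv
  have hle : f u ≤ ‖v‖⁻¹ ^ 2 * f v := by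
    rw [← hsmul]
    exact hmin (by simp [norm_smul, hv'.ne'])
  calc f u * ‖v‖ ^ 2 ≤ ‖v‖⁻¹ ^ 2 * f v * ‖v‖ ^ 2 := by gcongr
    _ = f v := by field_simp

theorem exists_pos_forall_mul_norm_sq_le {ι : Type*} [Finite ι] {f : ι → V → ℝ}
    (hf : ∀ i, Continuous (f i)) (hsmul : ∀ i (c : ℝ) (v : V), f i (c • v) = c ^ 2 * f i v)
    (hpos : ∀ i v, v ≠ 0 → 0 < f i v) : ∃ ε > 0, ∀ i v, ε * ‖v‖ ^ 2 ≤ f i v := by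
  choose e he hle using fun i => exists_pos_mul_norm_sq_le (hf i) (hsmul i) (hpos i)
  obtain ⟨ε, hεe, hε⟩ := ((Filter.eventually_all.2 fun i =>
    (eventually_lt_nhds (he i)).filter_mono nhdsWithin_le_nhds).and
      (self_mem_nhdsWithin : Set.Ioi (0 : ℝ) ∈ nhdsWithin 0 (Set.Ioi 0))).exists
  exact ⟨ε, hε, fun i v => (mul_le_mul_of_nonneg_right (hεe i).le (by positivity)).trans (hle i v)⟩

theorem sq_apply_le_of_quadEval_eq {r : ℕ} {b : Fin r → Fin r → ℝ} {ε : ℝ} (hε : 0 < ε)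
    (hb : ∀ v, ε * ‖v‖ ^ 2 ≤ quadEval b v) {v : Fin r → ℝ} {t : ℝ} (hv : quadEval b v = t)
    (i : Fin r) : v i ^ 2 ≤ t / ε := by
  rw [le_div_iff₀ hε, ← hv, mul_comm, ← sq_abs, ← Real.norm_eq_abs]
  exact (mul_le_mul_of_nonneg_left (pow_le_pow_left₀ (norm_nonneg _) (norm_le_pi_norm v i) 2)
    hε.le).trans (hb v)

end PositiveDefinite

theorem isIntegral_intCast_mul_of_mem_span {S E ι : Type*} [CommRing S] [CommRing E]
    [Algebra S E] [Algebra.IsIntegral ℤ S] {D : ℤ} {s : Set (ι → E)}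
    (hs : ∀ v ∈ s, ∀ i, IsIntegral ℤ (D * v i)) :
    ∀ w ∈ Submodule.span S s, ∀ i, IsIntegral ℤ (D * w i) := by
  intro w hw
  induction hw using Submodule.span_induction with
  | mem v hv => exact hs v hv
  | zero => simpa using fun _ => isIntegral_zero
  | add v w _ _ hv hw => intro i; simpa [mul_add] using (hv i).add (hw i)
  | smul c v _ hv =>
    intro i
    rw [Pi.smul_apply, Algebra.smul_def, mul_left_comm]
    exact ((Algebra.IsIntegral.isIntegral c).map (IsScalarTower.toAlgHom ℤ S E)).mul (hv i)

theorem exists_intCast_mul_isIntegral_of_fg {F ι : Type*} [Field F] [NumberField F] [Fintype ι]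
    {L : Submodule (𝓞 F) (ι → F)} (hL : L.FG) :
    ∃ D : ℤ, D ≠ 0 ∧ ∀ v ∈ L, ∀ i, IsIntegral ℤ (D * v i) := by
  classical
  obtain ⟨T, rfl⟩ := hL
  obtain ⟨D, hD, hint⟩ := exists_integral_multiples ℤ ℚ (T.biUnion fun t => Finset.univ.image t)
  refine ⟨D, hD, isIntegral_intCast_mul_of_mem_span fun t ht i => ?_⟩
  simpa [zsmul_eq_mul] using hint (t i) (Finset.mem_biUnion.2 ⟨t, ht, by simp⟩)

theorem Nat.exists_lt_of_descent {P : ℕ → Prop} {N : ℕ} (h : ∀ n, N ≤ n → P n → ∃ k < n, P k)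
    {n : ℕ} (hn : P n) : ∃ k < N, P k := by
  induction n using Nat.strong_induction_on with
  | _ n ih =>
    by_cases hnN : n < N
    · exact ⟨n, hnN, hn⟩
    · obtain ⟨k, hkn, hk⟩ := h n (not_lt.1 hnN) hn
      exact ih k hkn hk

theorem eventually_ceil_sqrt_mul_lt (c : ℝ) :
    ∀ᶠ n : ℕ in Filter.atTop, ⌈√(c * (2 * (n : ℝ) + 1))⌉₊ < n := by
  refine Filter.eventually_atTop.2 ⟨⌈3 * c⌉₊ + 3, fun n hn => ?_⟩
  have hn' : (⌈3 * c⌉₊ : ℝ) + 3 ≤ n := by exact_mod_cast hn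
  have hc := Nat.le_ceil (3 * c)
  have hc0 : (0 : ℝ) ≤ ⌈3 * c⌉₊ := Nat.cast_nonneg _
  have hsqrt : √(c * (2 * n + 1)) ≤ n - 1 := by
    rw [Real.sqrt_le_iff]
    refine ⟨by linarith, ?_⟩
    rcases le_or_gt 0 c with hc | hc <;> nlinarith
  have hceil := Nat.ceil_lt_add_one (Real.sqrt_nonneg (c * (2 * n + 1)))
  exact Nat.cast_lt.1 (hceil.trans_le (by linarith) : (⌈√(c * (2 * n + 1))⌉₊ : ℝ) < n)

def boundedIntegers (K : Type*) [Field K] (B : ℝ) : Set K :=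
  {x | IsIntegral ℤ x ∧ ∀ σ : K →+* ℝ, |σ x| ≤ B}

theorem boundedIntegers_mono {K : Type*} [Field K] {B B' : ℝ} (h : B ≤ B') :
    boundedIntegers K B ⊆ boundedIntegers K B' :=
  fun _ hx => ⟨hx.1, fun σ => (hx.2 σ).trans h⟩

def boundedAlgebraicIntegers (E : Type*) [Field E] [CharZero E] (d : ℕ) (B : ℝ) : Set E :=
  {x | IsIntegral ℤ x ∧ (minpoly ℚ x).natDegree ≤ d ∧ ∀ z ∈ (minpoly ℚ x).aroots ℂ, ‖z‖ ≤ B}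

open Polynomial in
theorem finite_boundedAlgebraicIntegers (E : Type*) [Field E] [CharZero E] (d : ℕ) (B : ℝ) :
    (boundedAlgebraicIntegers E d B).Finite := by
  classical
  let C := ⌈max B 1 ^ d * d.choose (d / 2)⌉₊
  refine (bUnion_roots_finite (algebraMap ℤ E) d (Set.finite_Icc (-(C : ℤ)) C)).subset
    fun x ⟨hint, hdeg, hroots⟩ => ?_
  simp_rw [Set.mem_iUnion]
  have hminpoly := minpoly.isIntegrallyClosed_eq_field_fractions' ℚ hint
  refine ⟨_, ⟨?_, fun i => ?_⟩, mem_rootSet.2 ⟨minpoly.ne_zero hint, minpoly.aeval ℤ x⟩⟩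
  · rwa [← (minpoly.monic hint).natDegree_map (algebraMap ℤ ℚ), ← hminpoly]
  · rw [Set.mem_Icc, ← abs_le, ← @Int.cast_le ℝ]
    have hbdd : ‖(minpoly ℚ x).coeff i‖ ≤ max B 1 ^ d * d.choose (d / 2) := by
      rw [← norm_algebraMap' ℂ, ← coeff_map (algebraMap ℚ ℂ)]
      exact coeff_bdd_of_roots_le _ (minpoly.monic hint.tower_top) (IsAlgClosed.splits _) hdeg
        hroots i
    refine (Eq.trans_le ?_ hbdd).trans (Nat.le_ceil _)
    rw [hminpoly, coeff_map, eq_intCast, Int.norm_cast_rat, Int.norm_eq_abs, Int.cast_abs]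

theorem IsTotallyRealField.isReal {K : Type} [Field K] (hK : IsTotallyRealField K)
    (φ : K →+* ℂ) : ComplexEmbedding.IsReal φ :=
  ComplexEmbedding.isReal_iff.2 <| RingHom.ext fun x => by
    rw [ComplexEmbedding.conjugate_coe_eq, Complex.conj_eq_iff_im]
    exact hK φ x

section IntermediateField

variable {F E : Type} [Field F] [Field E] [Algebra F E]

def adjoinBoundedIntegers (K : IntermediateField F E) (B : ℝ) : IntermediateField F E :=
  IntermediateField.adjoin F ((↑) '' boundedIntegers K B)

theorem adjoinBoundedIntegers_le (K : IntermediateField F E) (B : ℝ) :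
    adjoinBoundedIntegers K B ≤ K :=
  IntermediateField.adjoin_le_iff.2 <| by rintro _ ⟨x, -, rfl⟩; exact x.2

theorem adjoinBoundedIntegers_mono (K : IntermediateField F E) {B B' : ℝ} (h : B ≤ B') :
    adjoinBoundedIntegers K B ≤ adjoinBoundedIntegers K B' :=
  IntermediateField.adjoin.mono _ _ _ (Set.image_mono (boundedIntegers_mono h))

theorem exists_le_adjoinBoundedIntegers (K : IntermediateField F E) [NumberField K] :
    ∃ n : ℕ, K ≤ adjoinBoundedIntegers K n := by
  classical
  set b := integralBasis K
  set n := Finset.univ.sup fun p : _ × (K →+* ℝ) => ⌈|p.2 (b p.1)|⌉₊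
  have hb : ∀ i, (b i : E) ∈ adjoinBoundedIntegers K n := by
    refine fun i => IntermediateField.subset_adjoin F _ ⟨b i, ⟨?_, fun σ => ?_⟩, rfl⟩
    · simp only [b, integralBasis_apply, RingOfIntegers.isIntegral_coe]
    · have : ⌈|σ (b i)|⌉₊ ≤ n :=
        Finset.le_sup (f := fun p : _ × (K →+* ℝ) => ⌈|p.2 (b p.1)|⌉₊) (Finset.mem_univ (i, σ))
      exact (Nat.le_ceil _).trans (by exact_mod_cast this)
  refine ⟨n, fun y hy => ?_⟩
  rw [← Subtype.coe_mk y hy, ← b.sum_repr ⟨y, hy⟩, IntermediateField.coe_sum]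
  exact sum_mem fun i _ => by simpa using SubfieldClass.qsmul_mem _ (b.repr ⟨y, hy⟩ i) (hb i)

theorem image_boundedIntegers_subset [CharZero E] (K : IntermediateField F E) [NumberField K]
    (hK : IsTotallyRealField K) {d : ℕ} (hd : Module.finrank ℚ K ≤ d) (B : ℝ) :
    (↑) '' boundedIntegers K B ⊆ boundedAlgebraicIntegers E d B := by
  rintro _ ⟨x, ⟨hint, hσ⟩, rfl⟩
  have hmin : minpoly ℚ (x : E) = minpoly ℚ x :=
    minpoly.algebraMap_eq (algebraMap K E).injective x
  refine ⟨hint.map (IsScalarTower.toAlgHom ℤ K E), hmin ▸ (minpoly.natDegree_le x).trans hd,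
    fun z hz => ?_⟩
  rw [hmin] at hz
  obtain ⟨φ, rfl⟩ : z ∈ Set.range fun φ : K →+* ℂ => φ x := by
    rw [Embeddings.range_eval_eq_rootSet_minpoly, Polynomial.mem_rootSet]
    exact ⟨minpoly.ne_zero (Algebra.IsIntegral.isIntegral x), (Polynomial.mem_aroots.1 hz).2⟩
  change ‖φ x‖ ≤ B
  rw [← (hK.isReal φ).coe_embedding_apply, Complex.norm_real, Real.norm_eq_abs]
  exact hσ _

end IntermediateField

section Representation

variable {F E : Type} [Field F] [Field E] [Algebra F E] [CharZero E] {r : ℕ}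
  {a : Fin r → Fin r → F} {ε : ℝ} {m : ℕ} {D : ℤ}

-- `D` clears the denominators of the `𝓞 K`-span of `L`.
def RepresentsTotallyPositive (a : Fin r → Fin r → F) (m : ℕ) (D : ℤ) (K : Type) [Field K]
    [Algebra F K] : Prop :=
  ∀ α : 𝓞 K, TotallyPositive (α : K) → ∃ w : Fin r → K,
    (∀ i, IsIntegral ℤ (D * w i)) ∧ quadEval (fun i j => algebraMap F K (a i j)) w = m * α

theorem intCast_mul_mem_boundedIntegers {K : Type} [Field K] [Algebra F K] (hε : 0 < ε)
    (hQ : ∀ (σ : F →+* ℝ) v, ε * ‖v‖ ^ 2 ≤ quadEval (fun i j => σ (a i j)) v)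
    {α : K} {T : ℝ} (hα : ∀ σ : K →+* ℝ, σ α ≤ T) {w : Fin r → K}
    (hw : quadEval (fun i j => algebraMap F K (a i j)) w = m * α)
    (hwint : ∀ i, IsIntegral ℤ (D * w i)) (i : Fin r) :
    D * w i ∈ boundedIntegers K √(D ^ 2 * m / ε * T) := by
  refine ⟨hwint i, fun σ => Real.abs_le_sqrt ?_⟩
  have hσw := sq_apply_le_of_quadEval_eq hε (hQ (σ.comp (algebraMap F K)))
    (by simpa using (quadEval_map σ _ w).symm.trans (congrArg σ hw)) i
  rw [map_mul, map_intCast, mul_pow]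
  calc (D : ℝ) ^ 2 * σ (w i) ^ 2 ≤ D ^ 2 * (m * T / ε) := by
        gcongr
        exact hσw.trans (by gcongr; exact hα σ)
    _ = D ^ 2 * m / ε * T := by ring

theorem coe_mem_of_quadEval_eq_mul {K A : IntermediateField F E} (hm : m ≠ 0) {w : Fin r → K}
    (hwA : ∀ i, (w i : E) ∈ A) {α : K}
    (hw : quadEval (fun i j => algebraMap F K (a i j)) w = m * α) : (α : E) ∈ A := by
  have hQA : ((quadEval (fun i j => algebraMap F K (a i j)) w : K) : E) ∈ A := by
    rw [show ((_ : K) : E) = algebraMap K E _ from rfl, quadEval_map]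
    refine quadEval_mem A (fun i j => ?_) hwA
    rw [← IsScalarTower.algebraMap_apply]
    exact IntermediateField.algebraMap_mem A (a i j)
  have hα : (α : E) = (m : E)⁻¹ * ((quadEval (fun i j => algebraMap F K (a i j)) w : K) : E) := by
    have : (m : E) ≠ 0 := Nat.cast_ne_zero.2 hm
    rw [hw]
    push_cast
    field_simp
  rw [hα]
  exact mul_mem (inv_mem (natCast_mem _ _)) hQA

theorem image_boundedIntegers_subset_adjoin (K : IntermediateField F E) (hε : 0 < ε)
    (hQ : ∀ (σ : F →+* ℝ) v, ε * ‖v‖ ^ 2 ≤ quadEval (fun i j => σ (a i j)) v)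
    (hm : m ≠ 0) (hD : D ≠ 0) (hrep : RepresentsTotallyPositive a m D K) (n : ℕ) :
    ((↑) : K → E) '' boundedIntegers K n ⊆
      adjoinBoundedIntegers K √(D ^ 2 * m / ε * (2 * n + 1)) := by
  rintro _ ⟨x, ⟨hxint, hxσ⟩, rfl⟩
  set A := adjoinBoundedIntegers K √(D ^ 2 * m / ε * (2 * n + 1))
  set α : 𝓞 K := ⟨x, hxint⟩ + (n + 1 : ℕ)
  have hα : (α : K) = x + (n + 1 : ℕ) := rfl
  have hσα : ∀ σ : K →+* ℝ, 0 < σ α ∧ σ α ≤ 2 * n + 1 := fun σ => by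
    have := abs_le.1 (hxσ σ)
    rw [hα, map_add, map_natCast]
    push_cast
    constructor <;> linarith
  obtain ⟨w, hwint, hw⟩ := hrep α fun σ => (hσα σ).1
  have hwA : ∀ i, (w i : E) ∈ A := fun i => by
    have hDw : ((D * w i : K) : E) ∈ A := IntermediateField.subset_adjoin F _
      ⟨_, intCast_mul_mem_boundedIntegers hε hQ (fun σ => (hσα σ).2) hw hwint i, rfl⟩
    have : (w i : E) = (D : E)⁻¹ * ((D * w i : K) : E) := by
      push_cast
      field_simp
    rw [this]
    exact mul_mem (inv_mem (intCast_mem _ _)) hDw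
  have hx : (x : E) = ((α : K) : E) - (n + 1 : ℕ) := by
    rw [hα]
    push_cast
    ring
  rw [hx]
  exact sub_mem (coe_mem_of_quadEval_eq_mul hm hwA hw) (natCast_mem _ _)

theorem le_adjoinBoundedIntegers_of_represents (K : IntermediateField F E) [NumberField K]
    (hε : 0 < ε) (hQ : ∀ (σ : F →+* ℝ) v, ε * ‖v‖ ^ 2 ≤ quadEval (fun i j => σ (a i j)) v)
    (hm : m ≠ 0) (hD : D ≠ 0) (hrep : RepresentsTotallyPositive a m D K)
    {N : ℕ} (hN : ∀ n ≥ N, ⌈√(D ^ 2 * m / ε * (2 * (n : ℝ) + 1))⌉₊ < n) :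
    K ≤ adjoinBoundedIntegers K N := by
  obtain ⟨n₀, hn₀⟩ := exists_le_adjoinBoundedIntegers K
  obtain ⟨n, hnN, hn⟩ := Nat.exists_lt_of_descent
    (P := fun n : ℕ => K ≤ adjoinBoundedIntegers K n)
    (fun n hNn hK => ⟨_, hN n hNn, hK.trans <| IntermediateField.adjoin_le_iff.2 <|
      (image_boundedIntegers_subset_adjoin K hε hQ hm hD hrep n).trans
        (adjoinBoundedIntegers_mono K (Nat.le_ceil _))⟩) hn₀
  exact hn.trans (adjoinBoundedIntegers_mono K (by exact_mod_cast hnN.le))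

end Representation

theorem finitely_many_lifting_fields_general (F : Type) [Field F] [NumberField F]
    (d m r : ℕ) (hm : 0 < m)
    (a : Fin r → Fin r → F)
    (hQ : ∀ σ : F →+* ℝ, ∀ v : Fin r → ℝ, v ≠ 0 → 0 < quadEval (fun i j => σ (a i j)) v)
    (L : Submodule (𝓞 F) (Fin r → F)) (hLfg : L.FG) :
    {K : IntermediateField F (AlgebraicClosure F) |
      FiniteDimensional ℚ K ∧ Module.finrank ℚ K = d ∧ IsTotallyRealField K ∧
      ∀ α : 𝓞 K, TotallyPositive (α : K) →
        ∃ w ∈ Submodule.span (𝓞 K)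
            ((fun v : Fin r → F => fun i => algebraMap F K (v i)) '' (L : Set (Fin r → F))),
          quadEval (fun i j => algebraMap F K (a i j)) w = (m : K) * (α : K)}.Finite := by
  obtain ⟨ε, hε, hεQ⟩ := exists_pos_forall_mul_norm_sq_le
    (f := fun σ : F →+* ℝ => quadEval fun i j => σ (a i j))
    (fun _ => continuous_quadEval _) (fun _ => quadEval_smul _) hQ
  obtain ⟨D, hD, hDL⟩ := exists_intCast_mul_isIntegral_of_fg hLfg
  obtain ⟨N, hN⟩ := Filter.eventually_atTop.1 (eventually_ceil_sqrt_mul_lt (D ^ 2 * m / ε))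
  refine (((finite_boundedAlgebraicIntegers (AlgebraicClosure F) d N).finite_subsets).image
    (IntermediateField.adjoin F)).subset ?_
  rintro K ⟨hfin, hdeg, hreal, hrep⟩
  have : NumberField K := ⟨⟩
  refine ⟨_, image_boundedIntegers_subset K hreal hdeg.le N,
    le_antisymm (adjoinBoundedIntegers_le K N) ?_⟩
  refine le_adjoinBoundedIntegers_of_represents K hε hεQ hm.ne' hD (fun α hα => ?_) hN
  obtain ⟨w, hw, hQw⟩ := hrep α hα
  refine ⟨w, isIntegral_intCast_mul_of_mem_span ?_ w hw, hQw⟩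
  rintro _ ⟨v, hv, rfl⟩ i
  rw [← map_intCast (algebraMap F K), ← map_mul]
  exact (hDL v hv i).algebraMap

set_option synthInstance.maxHeartbeats 1000000 in
/-- Let `F` be totally real, `Q` a totally positive definite quadratic form on `F^r`, and
`L ⊆ F^r` a finitely generated `𝓞 F`-submodule spanning `F^r` with `Q(L) ⊆ 𝓞 F`. Then there
are only finitely many intermediate fields `F ⊆ K ⊆ F̄` that are totally real number fields of
degree `d` over `ℚ` such that the `𝓞 K`-span of `L` represents all of `m·𝓞 K⁺` under `Q`. -/
theorem finitely_many_lifting_fields (F : Type) [Field F] [NumberField F]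
    (hF : IsTotallyRealField F) (d m r : ℕ) (hd : 0 < d) (hm : 0 < m) (hr : 0 < r)
    (a : Fin r → Fin r → F)
    (hQ : ∀ σ : F →+* ℝ, ∀ v : Fin r → ℝ, v ≠ 0 → 0 < quadEval (fun i j => σ (a i j)) v)
    (L : Submodule (𝓞 F) (Fin r → F)) (hLfg : L.FG)
    (hLspan : Submodule.span F (L : Set (Fin r → F)) = ⊤)
    (hLint : ∀ v ∈ L, IsIntegral ℤ (quadEval a v)) :
    {K : IntermediateField F (AlgebraicClosure F) |
      FiniteDimensional ℚ K ∧ Module.finrank ℚ K = d ∧ IsTotallyRealField K ∧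
      ∀ α : 𝓞 K, TotallyPositive (α : K) →
        ∃ w ∈ Submodule.span (𝓞 K)
            ((fun v : Fin r → F => fun i => algebraMap F K (v i)) '' (L : Set (Fin r → F))),
          quadEval (fun i j => algebraMap F K (a i j)) w = (m : K) * (α : K)}.Finite :=
  finitely_many_lifting_fields_general F d m r hm a hQ L hLfg
end

section
/- Fix a squarefree integer D > 1. There exist constants c > 0 and Δ₀ > 0, depending only on D, such that for every totally real number field K of degree 4 over ℚ with √D ∈ K and discriminant Δ ≥ Δ₀, and for every β ∈ O_K with β ∉ ℚ(√D), one has Tr_{K/ℚ}(β²) ≥ c·Δ^{1/2}. -/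
/-!
Since `√D ∉ ℚ` and `β ∉ ℚ(√D)`, the algebraic integers `1, β, √D, √D β` form a `ℚ`-basis of `K`,
so their discriminant is a nonzero square integer multiple of `Δ`. As `K` is totally real, this
discriminant is `det (σⱼ eᵢ)²` for the four real embeddings `σⱼ`, and since `σⱼ √D = ±√D` the
determinant is small: its square is at most `(4D ∑ⱼ (σⱼ β)²)² = (4D Tr β²)²`. Hence
`Δ ≤ (4D Tr β²)²`, which is the claim with `c = 1 / (4D)`.
-/

open NumberField

open Module IntermediateField

theorem sq_mul_sub_mul_sub_le (a b c d : ℝ) :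
    ((a - b) * (c - d)) ^ 2 ≤ (a ^ 2 + b ^ 2 + c ^ 2 + d ^ 2) ^ 2 := by
  have hab : (a - b) ^ 2 ≤ 2 * (a ^ 2 + b ^ 2) := by nlinarith [sq_nonneg (a + b)]
  have hcd : (c - d) ^ 2 ≤ 2 * (c ^ 2 + d ^ 2) := by nlinarith [sq_nonneg (c + d)]
  calc ((a - b) * (c - d)) ^ 2 = (a - b) ^ 2 * (c - d) ^ 2 := mul_pow ..
    _ ≤ (2 * (a ^ 2 + b ^ 2)) * (2 * (c ^ 2 + d ^ 2)) := by gcongr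
    _ ≤ (a ^ 2 + b ^ 2 + c ^ 2 + d ^ 2) ^ 2 := by
        nlinarith [sq_nonneg (a ^ 2 + b ^ 2 - c ^ 2 - d ^ 2)]

theorem det_sq_le_of_forall_sq_eq (D : ℝ) (u v : Fin 4 → ℝ) (hu : ∀ j, u j ^ 2 = D) :
    (Matrix.of ![1, v, u, u * v]).det ^ 2 ≤ (4 * D * ∑ j, v j ^ 2) ^ 2 := by
  set r := √D
  have hD : D = r ^ 2 := (Real.sq_sqrt (hu 0 ▸ sq_nonneg (u 0))).symm
  have hsign : ∀ j, u j = r ∨ u j = -r := fun j => sq_eq_sq_iff_eq_or_eq_neg.1 ((hu j).trans hD)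
  have hpair (a b c d : ℝ) :=
    mul_le_mul_of_nonneg_left (sq_mul_sub_mul_sub_le a b c d) (by positivity : 0 ≤ 16 * r ^ 4)
  have h01 := hpair (v 0) (v 1) (v 2) (v 3)
  have h02 := hpair (v 0) (v 2) (v 1) (v 3)
  have h03 := hpair (v 0) (v 3) (v 1) (v 2)
  have hT : 0 ≤ (4 * r ^ 2 * (v 0 ^ 2 + v 1 ^ 2 + v 2 ^ 2 + v 3 ^ 2)) ^ 2 := sq_nonneg _
  rw [hD, Fin.sum_univ_four]
  simp [Matrix.det_succ_row_zero, Fin.sum_univ_succ, Fin.succAbove]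
  -- For each sign pattern of `u`, the determinant is either `0` or `±4r²(vᵢ - vⱼ)(vₖ - vₗ)`
  -- for a splitting `{i, j} ⊔ {k, l}` of the columns.
  rcases hsign 0 with h0 | h0 <;> rcases hsign 1 with h1 | h1 <;> rcases hsign 2 with h2 | h2 <;>
    rcases hsign 3 with h3 | h3 <;> rw [h0, h1, h2, h3] <;> linarith

theorem Squarefree.not_isSquare {M : Type*} [CommMonoid M] {x : M} (h : Squarefree x)
    (hx : ¬IsUnit x) : ¬IsSquare x := by
  rintro ⟨z, rfl⟩
  exact hx ((h z dvd_rfl).mul (h z dvd_rfl))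

theorem notMem_range_algebraMap_of_sq_eq {K : Type*} [Field K] [CharZero K] {D : ℤ} (hD1 : 1 < D)
    (hD : Squarefree D) {s : K} (hs : s ^ 2 = D) : s ∉ Set.range (algebraMap ℚ K) := by
  rintro ⟨q, rfl⟩
  have hDunit : ¬IsUnit D := by rw [Int.isUnit_iff]; omega
  refine hD.not_isSquare hDunit (Rat.isSquare_intCast_iff.1 ⟨q, ?_⟩)
  exact (algebraMap ℚ K).injective (by simpa [sq] using hs.symm)

theorem linearIndependent_one_mul_of_notMem_adjoin {k L : Type*} [Field k] [Field L] [Algebra k L]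
    {s β : L} (hs : s ∉ Set.range (algebraMap k L)) (hβ : β ∉ k⟮s⟯) :
    LinearIndependent k ![1, β, s, s * β] := by
  have h1s : LinearIndependent k ![(1 : k⟮s⟯), ⟨s, mem_adjoin_simple_self k s⟩] := by
    refine (LinearIndependent.pair_iff' one_ne_zero).2 fun a h => hs ⟨a, ?_⟩
    simpa [Algebra.smul_def] using congrArg Subtype.val h
  have h1β : LinearIndependent k⟮s⟯ ![1, β] := by
    refine (LinearIndependent.pair_iff' one_ne_zero).2 fun a h => hβ ?_
    rw [← h, Algebra.smul_def, mul_one]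
    exact a.2
  convert (linearIndependent_smul h1s h1β).comp _ finProdFinEquiv.symm.injective
  ext i
  fin_cases i <;> simp [finProdFinEquiv, Fin.divNat, Fin.modNat, Algebra.smul_def]

namespace NumberField

variable {K : Type*} [Field K] [NumberField K] {ι : Type*} [Fintype ι] [DecidableEq ι]

theorem exists_discr_eq_sq_mul_discr (hcard : Fintype.card ι = finrank ℚ K) {b : ι → K}
    (hb : ∀ i, IsIntegral ℤ (b i)) : ∃ q : ℤ, Algebra.discr ℚ b = q ^ 2 * discr K := by
  let e : ι ≃ Free.ChooseBasisIndex ℤ (𝓞 K) := Fintype.equivOfCardEq <| by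
    rw [hcard, ← RingOfIntegers.rank, finrank_eq_card_chooseBasisIndex]
  let B := (RingOfIntegers.basis K).reindex e.symm
  let Bℚ := (integralBasis K).reindex e.symm
  let bℤ : ι → 𝓞 K := fun i => ⟨b i, hb i⟩
  refine ⟨(B.toMatrix bℤ).det, ?_⟩
  have hP : Bℚ.toMatrix b = (B.toMatrix bℤ).map Int.cast := by
    ext i j
    exact integralBasis_repr_apply K (bℤ j) (e i)
  rw [← Bℚ.toMatrix_map_vecMul b, Algebra.discr_of_matrix_vecMul, hP, Basis.coe_reindex,
    Algebra.discr_reindex, ← coe_discr, Int.cast_det]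

theorem abs_discr_le_abs_discr (hcard : Fintype.card ι = finrank ℚ K) {b : ι → K}
    (hb : ∀ i, IsIntegral ℤ (b i)) (hli : LinearIndependent ℚ b) :
    (|discr K| : ℚ) ≤ |Algebra.discr ℚ b| := by
  obtain ⟨q, hq⟩ := exists_discr_eq_sq_mul_discr hcard hb
  have : Nonempty ι := Fintype.card_pos_iff.1 (hcard ▸ finrank_pos)
  have hne : Algebra.discr ℚ b ≠ 0 := by
    simpa using
      Algebra.discr_not_zero_of_basis ℚ (basisOfLinearIndependentOfCardEqFinrank hli hcard)
  have hq0 : q ≠ 0 := by rintro rfl; simp [hq] at hne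
  rw [hq, abs_mul, abs_sq]
  exact le_mul_of_one_le_left (abs_nonneg _)
    ((one_le_sq_iff_one_le_abs _).2 (mod_cast Int.one_le_abs hq0))

end NumberField

namespace IsTotallyRealField

variable {K : Type} [Field K]

theorem isReal_s13 (htr : IsTotallyRealField K) (σ : K →+* ℂ) : ComplexEmbedding.IsReal σ :=
  ComplexEmbedding.isReal_iff.2 <| RingHom.ext fun x => Complex.conj_eq_iff_im.2 (htr σ x)

variable [NumberField K] {ι : Type*} [Fintype ι]

theorem discr_eq_det_sq (htr : IsTotallyRealField K) (e : ι ≃ (K →ₐ[ℚ] ℂ)) [DecidableEq ι]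
    (b : ι → K) :
    (Algebra.discr ℚ b : ℝ) =
      (Matrix.of fun i j => (htr.isReal_s13 (e j : K →+* ℂ)).embedding (b i)).det ^ 2 := by
  apply Complex.ofReal_injective
  calc ((Algebra.discr ℚ b : ℝ) : ℂ) = algebraMap ℚ ℂ (Algebra.discr ℚ b) := by simp
    _ = (Algebra.embeddingsMatrixReindex ℚ ℂ b e).det ^ 2 :=
      Algebra.discr_eq_det_embeddingsMatrixReindex_pow_two ℚ ℂ b e
    _ = _ := by
      rw [Complex.ofReal_pow, ← Complex.ofRealHom_eq_coe, RingHom.map_det]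
      congr 2
      ext i j
      simp [Algebra.embeddingsMatrixReindex]

theorem trace_eq_sum (htr : IsTotallyRealField K) (e : ι ≃ (K →ₐ[ℚ] ℂ)) (x : K) :
    (Algebra.trace ℚ K x : ℝ) = ∑ j, (htr.isReal_s13 (e j : K →+* ℂ)).embedding x := by
  apply Complex.ofReal_injective
  calc ((Algebra.trace ℚ K x : ℝ) : ℂ) = algebraMap ℚ ℂ (Algebra.trace ℚ K x) := by simp
    _ = ∑ σ : K →ₐ[ℚ] ℂ, σ x := trace_eq_sum_embeddings ℂ
    _ = _ := by rw [← e.sum_comp]; simp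

theorem sqrt_discr_le_mul_trace_sq (htr : IsTotallyRealField K) (hrank : finrank ℚ K = 4)
    {D : ℤ} {s : K} (hs : s ^ 2 = D) (hsℚ : s ∉ Set.range (algebraMap ℚ K))
    {β : K} (hβint : IsIntegral ℤ β) (hβ : β ∉ ℚ⟮s⟯) :
    √(discr K : ℝ) ≤ 4 * D * Algebra.trace ℚ K (β ^ 2) := by
  have hsint : IsIntegral ℤ s := IsIntegral.of_pow two_pos (hs ▸ isIntegral_algebraMap)
  have hint : ∀ i, IsIntegral ℤ (![1, β, s, s * β] i) := by
    intro i
    fin_cases i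
    exacts [isIntegral_one, hβint, hsint, hsint.mul hβint]
  let e : Fin 4 ≃ (K →ₐ[ℚ] ℂ) :=
    Fintype.equivOfCardEq (by rw [AlgHom.card, hrank, Fintype.card_fin])
  let τ j := (htr.isReal_s13 (e j : K →+* ℂ)).embedding
  let u : Fin 4 → ℝ := fun j => τ j s
  let v : Fin 4 → ℝ := fun j => τ j β
  have htrace : (Algebra.trace ℚ K (β ^ 2) : ℝ) = ∑ j, v j ^ 2 := by
    simp [htr.trace_eq_sum e, τ, v]
  have hu : ∀ j, u j ^ 2 = D := fun j => by simp [u, τ, ← map_pow, hs]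
  have hD : 0 ≤ (D : ℝ) := hu 0 ▸ sq_nonneg _
  rw [htrace, Real.sqrt_le_iff]
  refine ⟨by positivity, ?_⟩
  calc (discr K : ℝ) ≤ |(Algebra.discr ℚ ![1, β, s, s * β] : ℝ)| := by
        exact_mod_cast (le_abs_self _).trans (NumberField.abs_discr_le_abs_discr
          (by simp [hrank]) hint (linearIndependent_one_mul_of_notMem_adjoin hsℚ hβ))
    _ = (Matrix.of ![1, v, u, u * v]).det ^ 2 := by
        rw [htr.discr_eq_det_sq e, abs_sq]
        congr 3
        ext i j
        fin_cases i <;> simp [τ, u, v]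
    _ ≤ (4 * D * ∑ j, v j ^ 2) ^ 2 := det_sq_le_of_forall_sq_eq D u v hu

end IsTotallyRealField

/-- Fix a squarefree integer `D > 1`. For totally real quartic fields `K ∋ √D` of large
enough discriminant `Δ`, every algebraic integer `β ∉ ℚ(√D)` satisfies
`Tr(β²) ≥ c·Δ^(1/2)`. -/
theorem trace_sq_lower_bound (D : ℤ) (hD1 : 1 < D) (hD : Squarefree D) :
    ∃ c Δ₀ : ℝ, 0 < c ∧ 0 < Δ₀ ∧
      ∀ (K : Type) [Field K] [NumberField K],
        IsTotallyRealField K → Module.finrank ℚ K = 4 →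
        (∃ s : K, s ^ 2 = (D : K)) →
        Δ₀ ≤ (NumberField.discr K : ℝ) →
        ∀ β : 𝓞 K,
          (∀ s : K, s ^ 2 = (D : K) → (β : K) ∉ IntermediateField.adjoin ℚ {s}) →
          c * (NumberField.discr K : ℝ) ^ ((1 : ℝ) / 2) ≤
            (Algebra.trace ℚ K ((β : K) ^ 2) : ℝ) := by
  have hD0 : (0 : ℝ) < D := by exact_mod_cast one_pos.trans hD1
  refine ⟨1 / (4 * D), 1, by positivity, one_pos, ?_⟩
  intro K _ _ htr hrank ⟨s, hs⟩ _ β hβ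
  rw [← Real.sqrt_eq_rpow, one_div_mul_eq_div, div_le_iff₀ (by positivity), mul_comm]
  exact htr.sqrt_discr_le_mul_trace_sq hrank hs (notMem_range_algebraMap_of_sq_eq hD1 hD hs)
    β.isIntegral_coe (hβ s hs)
end
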